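/- arXiv:2411.06998 — 6 statements merged into one kernel-verified Lean document; each statement's English description precedes it below -/
import Mathlib

section
/- For any p_t ≥ c with c ∈ (0,1), any τ ≥ 0, any r ≥ 0, t ≥ 0, and λ_a > λ_b ≥ 0, the delayed payoff [p_t (1-c) e^{-λ_a τ} - (1-p_t) c e^{-λ_b τ}] e^{-r(t+τ)} is at most the immediate payoff (p_t - c) e^{-r t}, with strict inequality when τ > 0 and p_t > 0. -/
theorem delay_dominated (c r la lb t τ p : ℝ) (hc : 0 < c) (hc1 : c < 1)
    (hr : 0 ≤ r) (ht : 0 ≤ t) (hτ : 0 ≤ τ) (hlb : 0 ≤ lb) (hab : lb < la)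
    (hp : c ≤ p) (hp1 : p ≤ 1) :
    (p * (1 - c) * Real.exp (-la * τ) - (1 - p) * c * Real.exp (-lb * τ)) *
        Real.exp (-r * (t + τ)) ≤ (p - c) * Real.exp (-r * t) ∧
      (0 < τ → 0 < p →
        (p * (1 - c) * Real.exp (-la * τ) - (1 - p) * c * Real.exp (-lb * τ)) *
            Real.exp (-r * (t + τ)) < (p - c) * Real.exp (-r * t)) := by
  have hA : 0 < Real.exp (-la * τ) := Real.exp_pos _
  have hE : 0 < Real.exp (-r * (t + τ)) := Real.exp_pos _
  have hAB : Real.exp (-la * τ) ≤ Real.exp (-lb * τ) :=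
    Real.exp_le_exp.2 (by nlinarith)
  have hBE : Real.exp (-lb * τ) * Real.exp (-r * (t + τ)) ≤ Real.exp (-r * t) := by
    rw [← Real.exp_add]
    exact Real.exp_le_exp.2 (by nlinarith)
  have hpc : 0 ≤ p - c := by linarith
  have hpos : 0 ≤ p * (1 - c) := by nlinarith
  constructor
  · nlinarith [mul_le_mul_of_nonneg_right (mul_le_mul_of_nonneg_left hAB hpos) hE.le,
      mul_le_mul_of_nonneg_left hBE hpc, Real.exp_pos (-lb * τ),
      mul_nonneg (mul_nonneg (by nlinarith : (0:ℝ) ≤ (1-p)*c) (Real.exp_pos (-lb*τ)).le) hE.le]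
  · intro hτ0 hp0
    have hAB' : Real.exp (-la * τ) < Real.exp (-lb * τ) :=
      Real.exp_lt_exp.2 (by nlinarith)
    have hpos' : 0 < p * (1 - c) := by nlinarith
    nlinarith [mul_lt_mul_of_pos_right (mul_lt_mul_of_pos_left hAB' hpos') hE,
      mul_le_mul_of_nonneg_left hBE hpc, Real.exp_pos (-lb * τ),
      mul_nonneg (mul_nonneg (by nlinarith : (0:ℝ) ≤ (1-p)*c) (Real.exp_pos (-lb*τ)).le) hE.le]
end

section
/- If p_0 ≤ 1/(1 + ((λ_a+r)/(λ_b+r))·(c/(1-c))) and λ_a > λ_b, then W_B(t) = -p_0 c e^{-(λ_a+r)t} + (1-p_0)(1-c) e^{-(λ_b+r)t} is strictly decreasing on [0,∞), so its maximum over t ≥ 0 is attained at t = 0. -/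
theorem WB_max_at_zero (p0 c r la lb : ℝ) (hp0 : 0 < p0) (hp1 : p0 < 1)
    (hc : 0 < c) (hc1 : c < 1) (hr : 0 ≤ r) (hlb : 0 ≤ lb) (hab : lb < la)
    (hbr : 0 < lb + r)
    (hsmall : p0 ≤ 1 / (1 + ((la + r) / (lb + r)) * (c / (1 - c)))) :
    StrictAntiOn (fun t : ℝ =>
        -p0 * c * Real.exp (-(la + r) * t) + (1 - p0) * (1 - c) * Real.exp (-(lb + r) * t))
      (Set.Ici (0 : ℝ)) ∧
    ∀ t : ℝ, 0 ≤ t →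
      -p0 * c * Real.exp (-(la + r) * t) + (1 - p0) * (1 - c) * Real.exp (-(lb + r) * t) ≤
        -p0 * c * Real.exp (-(la + r) * 0) + (1 - p0) * (1 - c) * Real.exp (-(lb + r) * 0) := by
  set A := la + r with hA
  set B := lb + r with hB
  have hAB : B < A := by simp [hA, hB]; linarith
  have hApos : 0 < A := lt_trans hbr hAB
  have hc' : 0 < 1 - c := by linarith
  have hp' : 0 < 1 - p0 := by linarith
  have hQ : 0 < (1 - p0) * (1 - c) := by positivity
  -- key inequality: p0 * c * A ≤ (1 - p0) * (1 - c) * B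
  have hkey : p0 * c * A ≤ (1 - p0) * (1 - c) * B := by
    have hden : 0 < 1 + A / B * (c / (1 - c)) := by positivity
    rw [le_div_iff₀ hden] at hsmall
    have h2 : p0 * (A * c / (B * (1 - c))) ≤ 1 - p0 := by
      rw [div_mul_div_comm] at hsmall; linarith
    rw [mul_div_assoc', div_le_iff₀ (by positivity : (0:ℝ) < B * (1 - c))] at h2
    nlinarith
  set f : ℝ → ℝ := fun t =>
    -p0 * c * Real.exp (-A * t) + (1 - p0) * (1 - c) * Real.exp (-B * t) with hf
  have hderiv : ∀ t : ℝ, HasDerivAt f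
      (p0 * c * A * Real.exp (-A * t) - (1 - p0) * (1 - c) * B * Real.exp (-B * t)) t := by
    intro t
    have h1 : HasDerivAt (fun t : ℝ => Real.exp (-A * t)) (-A * Real.exp (-A * t)) t := by
      simpa [mul_comm] using ((hasDerivAt_id t).const_mul (-A)).exp
    have h2 : HasDerivAt (fun t : ℝ => Real.exp (-B * t)) (-B * Real.exp (-B * t)) t := by
      simpa [mul_comm] using ((hasDerivAt_id t).const_mul (-B)).exp
    have := ((h1.const_mul (-p0 * c)).add (h2.const_mul ((1 - p0) * (1 - c))))
    refine this.congr_deriv ?_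
    ring
  have hderivneg : ∀ t ∈ Set.Ioi (0:ℝ), deriv f t < 0 := by
    intro t ht
    rw [(hderiv t).deriv]
    have hexp : Real.exp (-A * t) < Real.exp (-B * t) := by
      apply Real.exp_lt_exp.mpr
      have : (0:ℝ) < t := ht
      nlinarith
    have h1 : p0 * c * A * Real.exp (-A * t) ≤ (1 - p0) * (1 - c) * B * Real.exp (-A * t) :=
      mul_le_mul_of_nonneg_right hkey (Real.exp_nonneg _)
    have h2 : (1 - p0) * (1 - c) * B * Real.exp (-A * t) <
        (1 - p0) * (1 - c) * B * Real.exp (-B * t) := by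
      apply mul_lt_mul_of_pos_left hexp
      positivity
    linarith
  have hanti : StrictAntiOn f (Set.Ici (0:ℝ)) := by
    apply strictAntiOn_of_deriv_neg (convex_Ici 0)
    · exact (Continuous.continuousOn (by continuity))
    · simpa [interior_Ici] using hderivneg
  refine ⟨hanti, fun t ht => ?_⟩
  rcases eq_or_lt_of_le ht with h | h
  · simp [← h]
  · exact (hanti (le_refl (0:ℝ)) (le_of_lt h) h).le
end

section
/- If p_0 > 1/(1 + ((λ_a+r)/(λ_b+r))·(c/(1-c))), then the unique maximizer over t ≥ 0 of W_B(t) = -p_0 c e^{-(λ_a+r)t} + (1-p_0)(1-c) e^{-(λ_b+r)t} is t̂ = (1/(λ_a-λ_b)) ln( ((λ_a+r)/(λ_b+r)) · (p_0/(1-p_0)) · (c/(1-c)) ). -/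
set_option maxHeartbeats 1000000


theorem WB_unique_maximizer (p0 c r la lb : ℝ) (hp0 : 0 < p0) (hp1 : p0 < 1)
    (hc : 0 < c) (hc1 : c < 1) (hr : 0 ≤ r) (hlb : 0 ≤ lb) (hab : lb < la)
    (hbr : 0 < lb + r)
    (hbig : 1 / (1 + ((la + r) / (lb + r)) * (c / (1 - c))) < p0) :
    0 ≤ (1 / (la - lb)) *
        Real.log (((la + r) / (lb + r)) * (p0 / (1 - p0)) * (c / (1 - c))) ∧
    ∀ t : ℝ, 0 ≤ t →
      t ≠ (1 / (la - lb)) *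
          Real.log (((la + r) / (lb + r)) * (p0 / (1 - p0)) * (c / (1 - c))) →
      -p0 * c * Real.exp (-(la + r) * t) + (1 - p0) * (1 - c) * Real.exp (-(lb + r) * t) <
        -p0 * c * Real.exp (-(la + r) * ((1 / (la - lb)) *
            Real.log (((la + r) / (lb + r)) * (p0 / (1 - p0)) * (c / (1 - c))))) +
          (1 - p0) * (1 - c) * Real.exp (-(lb + r) * ((1 / (la - lb)) *
            Real.log (((la + r) / (lb + r)) * (p0 / (1 - p0)) * (c / (1 - c))))) := by
  have hd : (0:ℝ) < la - lb := sub_pos.mpr hab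
  have har : 0 < la + r := by linarith
  have hp1' : (0:ℝ) < 1 - p0 := by linarith
  have hc1' : (0:ℝ) < 1 - c := by linarith
  set K : ℝ := ((la + r) / (lb + r)) * (p0 / (1 - p0)) * (c / (1 - c)) with hK
  set T : ℝ := (1 / (la - lb)) * Real.log K with hT
  have hKpos : 0 < K :=
    mul_pos (mul_pos (div_pos har hbr) (div_pos hp0 hp1')) (div_pos hc hc1')
  have hK1 : 1 < K := by
    have hq : (0:ℝ) < ((la + r) / (lb + r)) * (c / (1 - c)) :=
      mul_pos (div_pos har hbr) (div_pos hc hc1')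
    rw [div_lt_iff₀ (by linarith)] at hbig
    have hKeq : K = (p0 * (((la + r) / (lb + r)) * (c / (1 - c)))) / (1 - p0) := by
      rw [hK]; ring
    rw [hKeq, lt_div_iff₀ hp1']
    nlinarith
  have hTpos : 0 < T := mul_pos (by positivity) (Real.log_pos hK1)
  have hTlog : (la - lb) * T = Real.log K := by
    rw [hT]; field_simp
  have hKexp : Real.exp ((la - lb) * T) = K := by rw [hTlog, Real.exp_log hKpos]
  set f : ℝ → ℝ := fun t => -p0 * c * Real.exp (-(la + r) * t) +
      (1 - p0) * (1 - c) * Real.exp (-(lb + r) * t) with hf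
  set D : ℝ → ℝ := fun t => p0 * c * (la + r) * Real.exp (-(la + r) * t) -
      (1 - p0) * (1 - c) * (lb + r) * Real.exp (-(lb + r) * t) with hD
  have hderiv : ∀ t, HasDerivAt f (D t) t := by
    intro t
    have h1 : HasDerivAt (fun s => Real.exp (-(la + r) * s))
        (Real.exp (-(la + r) * t) * (-(la + r))) t := by
      simpa using (((hasDerivAt_id t).const_mul (-(la + r))).exp)
    have h2 : HasDerivAt (fun s => Real.exp (-(lb + r) * s))
        (Real.exp (-(lb + r) * t) * (-(lb + r))) t := by
      simpa using (((hasDerivAt_id t).const_mul (-(lb + r))).exp)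
    have h := (h1.const_mul (-p0 * c)).add (h2.const_mul ((1 - p0) * (1 - c)))
    refine h.congr_deriv ?_
    simp only [hD]; ring
  have hDeq : ∀ t, D t = (1 - p0) * (1 - c) * (lb + r) * Real.exp (-(la + r) * t) *
      (K - Real.exp ((la - lb) * t)) := by
    intro t
    have he : Real.exp (-(lb + r) * t) =
        Real.exp (-(la + r) * t) * Real.exp ((la - lb) * t) := by
      rw [← Real.exp_add]; ring_nf
    simp only [hD, hK, he]
    field_simp
  have hcont : Continuous f := by
    simp only [hf]; continuity
  have hmono : StrictMonoOn f (Set.Iic T) := by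
    apply strictMonoOn_of_deriv_pos (convex_Iic T) hcont.continuousOn
    intro t ht
    rw [interior_Iic, Set.mem_Iio] at ht
    rw [(hderiv t).deriv, hDeq t]
    have hlt : Real.exp ((la - lb) * t) < K := by
      rw [← hKexp]
      exact Real.exp_lt_exp.mpr (mul_lt_mul_of_pos_left ht hd)
    exact mul_pos (by positivity) (sub_pos.mpr hlt)
  have hanti : StrictAntiOn f (Set.Ici T) := by
    apply strictAntiOn_of_deriv_neg (convex_Ici T) hcont.continuousOn
    intro t ht
    rw [interior_Ici, Set.mem_Ioi] at ht
    rw [(hderiv t).deriv, hDeq t]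
    have hlt : K < Real.exp ((la - lb) * t) := by
      rw [← hKexp]
      exact Real.exp_lt_exp.mpr (mul_lt_mul_of_pos_left ht hd)
    exact mul_neg_of_pos_of_neg (by positivity) (sub_neg.mpr hlt)
  refine ⟨hTpos.le, ?_⟩
  intro t ht hne
  rcases lt_or_gt_of_ne hne with hlt | hgt
  · exact hmono (Set.mem_Iic.mpr hlt.le) (Set.mem_Iic.mpr le_rfl) hlt
  · exact hanti (Set.mem_Ici.mpr le_rfl) (Set.mem_Ici.mpr hgt.le) hgt
end

section
/- The ex ante approval probability p_0 e^{-λ_a t*} + (1-p_0) e^{-λ_b t*}, with t* = (1/(λ_a-λ_b)) ln((p_0/(1-p_0))·((1-p*)/p*)), equals p_0^{-λ_b/(λ_a-λ_b)} (1-p_0)^{λ_a/(λ_a-λ_b)} [ ((1-p*)/p*)^{-λ_a/(λ_a-λ_b)} + ((1-p*)/p*)^{-λ_b/(λ_a-λ_b)} ]. -/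
theorem approval_prob_formula (la lb p0 pstar : ℝ) (hlb : 0 < lb) (hab : lb < la)
    (hps : 0 < pstar) (hle : pstar ≤ p0) (hp1 : p0 < 1) :
    p0 * Real.exp (-la * ((1 / (la - lb)) *
        Real.log ((p0 / (1 - p0)) * ((1 - pstar) / pstar)))) +
      (1 - p0) * Real.exp (-lb * ((1 / (la - lb)) *
        Real.log ((p0 / (1 - p0)) * ((1 - pstar) / pstar)))) =
    p0 ^ (-(lb / (la - lb))) * (1 - p0) ^ (la / (la - lb)) *
      (((1 - pstar) / pstar) ^ (-(la / (la - lb))) +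
        ((1 - pstar) / pstar) ^ (-(lb / (la - lb)))) := by
  have hd : (0:ℝ) < la - lb := sub_pos.mpr hab
  have hp0 : 0 < p0 := lt_of_lt_of_le hps hle
  have h1p0 : 0 < 1 - p0 := sub_pos.mpr hp1
  have hq : 0 < 1 - pstar := sub_pos.mpr (lt_of_le_of_lt hle hp1)
  have hA : 0 < p0 / (1 - p0) := div_pos hp0 h1p0
  have hB : 0 < (1 - pstar) / pstar := div_pos hq hps
  have hX : 0 < (p0 / (1 - p0)) * ((1 - pstar) / pstar) := mul_pos hA hB
  have key : ∀ l : ℝ,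
      Real.exp (-l * ((1 / (la - lb)) *
        Real.log ((p0 / (1 - p0)) * ((1 - pstar) / pstar)))) =
      p0 ^ (-(l / (la - lb))) * (1 - p0) ^ (l / (la - lb)) *
        ((1 - pstar) / pstar) ^ (-(l / (la - lb))) := by
    intro l
    have e1 : Real.exp (-l * ((1 / (la - lb)) *
        Real.log ((p0 / (1 - p0)) * ((1 - pstar) / pstar)))) =
        ((p0 / (1 - p0)) * ((1 - pstar) / pstar)) ^ (-(l / (la - lb))) := by
      rw [Real.rpow_def_of_pos hX]
      congr 1
      ring
    rw [e1, Real.mul_rpow hA.le hB.le, Real.div_rpow hp0.le h1p0.le,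
      Real.rpow_neg hp0.le (l / (la - lb)), Real.rpow_neg hB.le]
    rw [Real.rpow_neg h1p0.le]
    field_simp
  rw [key la, key lb]
  have h1 : p0 * p0 ^ (-(la / (la - lb))) = p0 ^ (-(lb / (la - lb))) := by
    have h := (Real.rpow_add hp0 1 (-(la / (la - lb)))).symm
    rw [Real.rpow_one] at h
    rw [h]
    congr 1
    field_simp
    ring
  have h2 : (1 - p0) * (1 - p0) ^ (lb / (la - lb)) = (1 - p0) ^ (la / (la - lb)) := by
    have h := (Real.rpow_add h1p0 1 (lb / (la - lb))).symm
    rw [Real.rpow_one] at h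
    rw [h]
    congr 1
    field_simp
    ring
  linear_combination ((1 - p0) ^ (la / (la - lb)) *
      ((1 - pstar) / pstar) ^ (-(la / (la - lb)))) * h1 +
    (p0 ^ (-(lb / (la - lb))) * ((1 - pstar) / pstar) ^ (-(lb / (la - lb)))) * h2
end

section
/- Faction A's ex ante expected payoff p_0 e^{-λ_a t*}(1-c) - (1-p_0)e^{-λ_b t*} c, with t* = (1/(λ_a-λ_b)) ln((p_0/(1-p_0))·((1-p*)/p*)), equals p_0^{-λ_b/(λ_a-λ_b)} (1-p_0)^{λ_a/(λ_a-λ_b)} [ ((1-p*)/p*)^{-λ_a/(λ_a-λ_b)} (1-c) - ((1-p*)/p*)^{-λ_b/(λ_a-λ_b)} c ], and this is strictly decreasing in p_0 if and only if (1-c)/c > (1-p*)/p*, i.e. p* > c. -/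
private lemma aux_eq (la lb c pstar p0 : ℝ) (hlb : 0 < lb) (hab : lb < la)
    (hps : 0 < pstar) (hps1 : pstar < 1) (h0 : 0 < p0) (h1 : p0 < 1) :
    p0 * Real.exp (-la * ((1 / (la - lb)) *
        Real.log ((p0 / (1 - p0)) * ((1 - pstar) / pstar)))) * (1 - c) -
      (1 - p0) * Real.exp (-lb * ((1 / (la - lb)) *
        Real.log ((p0 / (1 - p0)) * ((1 - pstar) / pstar)))) * c =
    p0 ^ (-(lb / (la - lb))) * (1 - p0) ^ (la / (la - lb)) *
      (((1 - pstar) / pstar) ^ (-(la / (la - lb))) * (1 - c) -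
        ((1 - pstar) / pstar) ^ (-(lb / (la - lb))) * c) := by
  have hs : (0:ℝ) < la - lb := by linarith
  have hq' : (0:ℝ) < 1 - p0 := by linarith
  have hr : (0:ℝ) < (1 - pstar) / pstar := div_pos (by linarith) hps
  have hq : (0:ℝ) < p0 / (1 - p0) := div_pos h0 hq'
  have hx : (0:ℝ) < (p0 / (1 - p0)) * ((1 - pstar) / pstar) := mul_pos hq hr
  have eA : Real.exp (-la * ((1 / (la - lb)) *
      Real.log ((p0 / (1 - p0)) * ((1 - pstar) / pstar)))) =
      ((p0 / (1 - p0)) * ((1 - pstar) / pstar)) ^ (-(la / (la - lb))) := by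
    rw [Real.rpow_def_of_pos hx]; congr 1; ring
  have eB : Real.exp (-lb * ((1 / (la - lb)) *
      Real.log ((p0 / (1 - p0)) * ((1 - pstar) / pstar)))) =
      ((p0 / (1 - p0)) * ((1 - pstar) / pstar)) ^ (-(lb / (la - lb))) := by
    rw [Real.rpow_def_of_pos hx]; congr 1; ring
  have e : ∀ t : ℝ, (p0 / (1 - p0)) ^ t = p0 ^ t * (1 - p0) ^ (-t) := by
    intro t
    rw [Real.div_rpow h0.le hq'.le, Real.rpow_neg hq'.le, div_eq_mul_inv]
  rw [eA, eB, Real.mul_rpow hq.le hr.le, Real.mul_rpow hq.le hr.le, e, e, neg_neg, neg_neg]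
  have f1 : p0 * p0 ^ (-(la / (la - lb))) = p0 ^ (-(lb / (la - lb))) := by
    rw [show -(lb / (la - lb)) = 1 + (-(la / (la - lb))) by field_simp; ring]
    rw [Real.rpow_add h0, Real.rpow_one]
  have f2 : (1 - p0) * (1 - p0) ^ (lb / (la - lb)) = (1 - p0) ^ (la / (la - lb)) := by
    rw [show la / (la - lb) = 1 + lb / (la - lb) by field_simp; ring]
    rw [Real.rpow_add hq', Real.rpow_one]
  linear_combination ((1 - p0) ^ (la / (la - lb)) * ((1 - pstar) / pstar) ^ (-(la / (la - lb))) * (1 - c)) * f1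
    - (p0 ^ (-(lb / (la - lb))) * ((1 - pstar) / pstar) ^ (-(lb / (la - lb))) * c) * f2

theorem factionA_payoff_in_p0 (la lb c pstar : ℝ) (hlb : 0 < lb) (hab : lb < la)
    (hc : 0 < c) (hc1 : c ≤ 1 / 2) (hps : 0 < pstar) (hps1 : pstar < 1) :
    (∀ p0 : ℝ, pstar ≤ p0 → p0 < 1 →
      p0 * Real.exp (-la * ((1 / (la - lb)) *
          Real.log ((p0 / (1 - p0)) * ((1 - pstar) / pstar)))) * (1 - c) -
        (1 - p0) * Real.exp (-lb * ((1 / (la - lb)) *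
          Real.log ((p0 / (1 - p0)) * ((1 - pstar) / pstar)))) * c =
      p0 ^ (-(lb / (la - lb))) * (1 - p0) ^ (la / (la - lb)) *
        (((1 - pstar) / pstar) ^ (-(la / (la - lb))) * (1 - c) -
          ((1 - pstar) / pstar) ^ (-(lb / (la - lb))) * c)) ∧
    (StrictAntiOn
        (fun p0 : ℝ =>
          p0 * Real.exp (-la * ((1 / (la - lb)) *
              Real.log ((p0 / (1 - p0)) * ((1 - pstar) / pstar)))) * (1 - c) -
            (1 - p0) * Real.exp (-lb * ((1 / (la - lb)) *
              Real.log ((p0 / (1 - p0)) * ((1 - pstar) / pstar)))) * c)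
        (Set.Ico pstar 1) ↔
      (1 - pstar) / pstar < (1 - c) / c) ∧
    ((1 - pstar) / pstar < (1 - c) / c ↔ c < pstar) := by
  have hs : (0:ℝ) < la - lb := by linarith
  have hr : (0:ℝ) < (1 - pstar) / pstar := div_pos (by linarith) hps
  set K : ℝ := ((1 - pstar) / pstar) ^ (-(la / (la - lb))) * (1 - c) -
      ((1 - pstar) / pstar) ^ (-(lb / (la - lb))) * c with hK_def
  set g : ℝ → ℝ := fun p0 => p0 ^ (-(lb / (la - lb))) * (1 - p0) ^ (la / (la - lb)) with hg_def
  have hgpos : ∀ x ∈ Set.Ico pstar 1, 0 < g x := by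
    intro x hx
    exact mul_pos (Real.rpow_pos_of_pos (lt_of_lt_of_le hps hx.1) _)
      (Real.rpow_pos_of_pos (by simp only [Set.mem_Ico] at hx; linarith [hx.2]) _)
  have hganti : ∀ x ∈ Set.Ico pstar 1, ∀ y ∈ Set.Ico pstar 1, x < y → g y < g x := by
    intro x hx y hy hxy
    have hx0 : 0 < x := lt_of_lt_of_le hps hx.1
    have hy1 : y < 1 := hy.2
    have a1 : y ^ (-(lb / (la - lb))) < x ^ (-(lb / (la - lb))) := by
      rw [Real.rpow_neg hx0.le, Real.rpow_neg (hx0.trans hxy).le]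
      exact inv_strictAnti₀ (Real.rpow_pos_of_pos hx0 _)
        (Real.rpow_lt_rpow hx0.le hxy (div_pos hlb hs))
    have a2 : (1 - y) ^ (la / (la - lb)) < (1 - x) ^ (la / (la - lb)) :=
      Real.rpow_lt_rpow (by linarith) (by linarith) (div_pos (by linarith) hs)
    exact mul_lt_mul'' a1 a2 (Real.rpow_pos_of_pos (hx0.trans hxy) _).le
      (Real.rpow_pos_of_pos (by linarith) _).le
  have hcongr : ∀ x ∈ Set.Ico pstar 1,
      x * Real.exp (-la * ((1 / (la - lb)) *
          Real.log ((x / (1 - x)) * ((1 - pstar) / pstar)))) * (1 - c) -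
        (1 - x) * Real.exp (-lb * ((1 / (la - lb)) *
          Real.log ((x / (1 - x)) * ((1 - pstar) / pstar)))) * c = g x * K := by
    intro x hx
    exact aux_eq la lb c pstar x hlb hab hps hps1 (lt_of_lt_of_le hps hx.1) hx.2
  have hKiff : 0 < K ↔ (1 - pstar) / pstar < (1 - c) / c := by
    have hrB : ((1 - pstar) / pstar) ^ (-(lb / (la - lb))) =
        ((1 - pstar) / pstar) ^ (-(la / (la - lb))) * ((1 - pstar) / pstar) := by
      rw [show -(lb / (la - lb)) = -(la / (la - lb)) + 1 by field_simp; ring,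
        Real.rpow_add hr, Real.rpow_one]
    have hApos : 0 < ((1 - pstar) / pstar) ^ (-(la / (la - lb))) :=
      Real.rpow_pos_of_pos hr _
    rw [hK_def, hrB, lt_div_iff₀ hc]
    constructor
    · intro h; nlinarith
    · intro h; nlinarith
  refine ⟨fun p0 hp hp1 => aux_eq la lb c pstar p0 hlb hab hps hps1
      (lt_of_lt_of_le hps hp) hp1, ?_, ?_⟩
  · rw [← hKiff]
    constructor
    · intro h
      by_contra hK
      push_neg at hK
      have hm1 : pstar ∈ Set.Ico pstar 1 := ⟨le_refl _, hps1⟩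
      have hm2 : (pstar + 1) / 2 ∈ Set.Ico pstar 1 := ⟨by linarith, by linarith⟩
      have hlt : pstar < (pstar + 1) / 2 := by linarith
      have h2 := h hm1 hm2 hlt
      simp only at h2
      rw [hcongr _ hm1, hcongr _ hm2] at h2
      have hga := hganti _ hm1 _ hm2 hlt
      have := mul_le_mul_of_nonpos_right hga.le hK
      linarith
    · intro hK x hx y hy hxy
      simp only
      rw [hcongr _ hx, hcongr _ hy]
      exact mul_lt_mul_of_pos_right (hganti _ hx _ hy hxy) hK
  · rw [div_lt_div_iff₀ hps hc]
    constructor <;> intro h <;> nlinarith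
end

section
/- If α > 1-c ≥ c with c ∈ (0,1/2], then for all T with e^{(λ_a-λ_b)T} ≤ (p_0/(1-p_0))·((1-c)/c), the derivative of W(T) = p_0(α-c)e^{-(λ_a+r)T} + (1-p_0)(1-α-c)e^{-(λ_b+r)T} is strictly negative; in particular ((λ_a+r) p_0 (α-c)) / ((λ_b+r)(1-p_0)(α-(1-c))) > (p_0/(1-p_0))·((1-c)/c) for all α ∈ (1-c, 1]. -/
theorem welfare_deriv_neg_case2 (p0 c r la lb α : ℝ) (hp0 : 0 < p0) (hp1 : p0 < 1)
    (hc : 0 < c) (hc1 : c ≤ 1 / 2) (hr : 0 ≤ r) (hlb : 0 ≤ lb) (hab : lb < la)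
    (hbr : 0 < lb + r) (hα1 : 1 - c < α) (hα2 : α ≤ 1) :
    (∀ T : ℝ, 0 ≤ T →
      Real.exp ((la - lb) * T) ≤ (p0 / (1 - p0)) * ((1 - c) / c) →
      deriv
        (fun S : ℝ =>
          p0 * (α - c) * Real.exp (-(la + r) * S) +
            (1 - p0) * (1 - α - c) * Real.exp (-(lb + r) * S)) T < 0) ∧
    ((la + r) * p0 * (α - c) / ((lb + r) * (1 - p0) * (α - (1 - c))) >
      (p0 / (1 - p0)) * ((1 - c) / c)) := by
  have hp1' : 0 < 1 - p0 := by linarith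
  have hc' : 0 < 1 - c := by linarith
  have har : 0 < la + r := by linarith
  have hαc : 0 < α - c := by linarith
  have hα1c : 0 < α - (1 - c) := by linarith
  have hD : 0 < (lb + r) * (1 - p0) * (α - (1 - c)) := by positivity
  have e1 : (1 - c) * (α - (1 - c)) ≤ c * (α - c) := by
    nlinarith [mul_nonneg (by linarith : (0:ℝ) ≤ 1 - 2*c) (by linarith : (0:ℝ) ≤ 1 - α)]
  have hcore : (lb + r) * ((1 - c) * (α - (1 - c))) < (la + r) * (c * (α - c)) :=
    calc (lb + r) * ((1 - c) * (α - (1 - c))) ≤ (lb + r) * (c * (α - c)) :=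
          mul_le_mul_of_nonneg_left e1 hbr.le
      _ < (la + r) * (c * (α - c)) :=
          mul_lt_mul_of_pos_right (by linarith) (by positivity)
  have key : (la + r) * p0 * (α - c) / ((lb + r) * (1 - p0) * (α - (1 - c))) >
      (p0 / (1 - p0)) * ((1 - c) / c) := by
    rw [gt_iff_lt, lt_div_iff₀ hD]
    rw [div_mul_div_comm, div_mul_eq_mul_div, div_lt_iff₀ (by positivity)]
    nlinarith [mul_lt_mul_of_pos_left hcore (mul_pos hp0 hp1')]
  refine ⟨fun T hT hTle => ?_, key⟩
  have ha : HasDerivAt (fun S : ℝ => -(la + r) * S) (-(la + r)) T := by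
    simpa using (hasDerivAt_id T).const_mul (-(la + r))
  have hb : HasDerivAt (fun S : ℝ => -(lb + r) * S) (-(lb + r)) T := by
    simpa using (hasDerivAt_id T).const_mul (-(lb + r))
  have h1 : HasDerivAt (fun S : ℝ =>
      p0 * (α - c) * Real.exp (-(la + r) * S) +
        (1 - p0) * (1 - α - c) * Real.exp (-(lb + r) * S))
      (p0 * (α - c) * (Real.exp (-(la + r) * T) * -(la + r)) +
        (1 - p0) * (1 - α - c) * (Real.exp (-(lb + r) * T) * -(lb + r))) T :=
    (ha.exp.const_mul _).add (hb.exp.const_mul _)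
  rw [h1.deriv]
  have hEa : 0 < Real.exp (-(la + r) * T) := Real.exp_pos _
  have hEb : 0 < Real.exp (-(lb + r) * T) := Real.exp_pos _
  have h2 : Real.exp ((la - lb) * T) * ((lb + r) * (1 - p0) * (α - (1 - c))) <
      (la + r) * p0 * (α - c) := by
    have h3 := (lt_div_iff₀ hD).mp key
    have h4 := mul_le_mul_of_nonneg_right hTle hD.le
    linarith
  have hexp : Real.exp (-(lb + r) * T) = Real.exp ((la - lb) * T) * Real.exp (-(la + r) * T) := by
    rw [← Real.exp_add]; ring_nf
  have h5 : (lb + r) * (1 - p0) * (α - (1 - c)) * Real.exp (-(lb + r) * T) <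
      (la + r) * p0 * (α - c) * Real.exp (-(la + r) * T) := by
    rw [hexp]
    nlinarith [mul_lt_mul_of_pos_right h2 hEa]
  nlinarith [h5]
end
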